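/- Let L be a finite relational language and K a class of finite L-structures (with universes subsets of κ) closed under isomorphism and substructure and satisfying the amalgamation property and joint embedding property. Then the poset P_{κ,K}, whose conditions are members of K with universe a finite subset of κ, ordered by p ≤ q iff the universe of q is contained in that of p and q is the induced substructure of p on its universe, has the Knaster property (every uncountable set of conditions has an uncountable pairwise-compatible subset), provided κ ≥ ℵ₁. -/

import Mathlib

/-- A finite `L`-structure with universe a finite subset of `κ`, where the
relational language `L` is given by a type of relation symbols with arities `ar`. -/
structure FinStruct (L : Type*) (ar : L → ℕ) (κ : Type*) where
  A : Finset κ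
  rel : ∀ R : L, (Fin (ar R) → κ) → Prop
  supp : ∀ R t, rel R t → ∀ i, t i ∈ A

namespace FinStruct

variable {L : Type*} {ar : L → ℕ} {κ : Type*}

/-- `p` extends `q` : the universe grows and `q` is the induced substructure. -/
def Ext (p q : FinStruct L ar κ) : Prop :=
  q.A ⊆ p.A ∧ ∀ R t, (∀ i, t i ∈ q.A) → (q.rel R t ↔ p.rel R t)

/-- The induced substructure of `p` on `B`. -/
def restrict (p : FinStruct L ar κ) (B : Finset κ) [DecidableEq κ] :
    FinStruct L ar κ where
  A := p.A ∩ B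
  rel R t := p.rel R t ∧ ∀ i, t i ∈ B
  supp := fun R t h i => Finset.mem_inter.2 ⟨p.supp R t h.1 i, h.2 i⟩

/-- An embedding of `p` into `q` : an injection on the universe preserving and
reflecting all relations. -/
def Emb (p q : FinStruct L ar κ) : Prop :=
  ∃ f : κ → κ, Set.InjOn f p.A ∧ (∀ x ∈ p.A, f x ∈ q.A) ∧
    ∀ R t, (∀ i, t i ∈ p.A) → (p.rel R t ↔ q.rel R (f ∘ t))

/-- An isomorphism of `p` with `q` : an embedding which is onto the universe of `q`. -/
def Iso (p q : FinStruct L ar κ) : Prop :=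
  ∃ f : κ → κ, Set.InjOn f p.A ∧ (∀ x ∈ p.A, f x ∈ q.A) ∧
    (∀ y ∈ q.A, ∃ x ∈ p.A, f x = y) ∧
    ∀ R t, (∀ i, t i ∈ p.A) → (p.rel R t ↔ q.rel R (f ∘ t))

/-- A filter on the poset `P_{κ,K}` (conditions the members of `K`). -/
def IsPFilter (K G : Set (FinStruct L ar κ)) : Prop :=
  G.Nonempty ∧ G ⊆ K ∧ (∀ p ∈ G, ∀ q ∈ K, p.Ext q → q ∈ G) ∧
    (∀ p ∈ G, ∀ q ∈ G, ∃ s ∈ G, s.Ext p ∧ s.Ext q)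

/-- The generic interpretation of the relation symbols. -/
def genRel (G : Set (FinStruct L ar κ)) (R : L) (t : Fin (ar R) → κ) : Prop :=
  ∃ p ∈ G, p.rel R t

end FinStruct

open FinStruct

/-!
Only finitely many conditions share a given universe, so an uncountable set of conditions has
uncountably many universes, and by the Δ-system lemma uncountably many conditions with distinct
universes that pairwise meet in a common root `r`. Only finitely many structures live on `r`, so
uncountably many of these conditions induce the same one on it; any two of them then agree on the
intersection of their universes, and amalgamate.
-/

theorem Set.exists_not_countable_fiber {α β : Type*} [Countable β] {s : Set α}
    (hs : ¬ s.Countable) (f : α → β) : ∃ b, ¬ {a ∈ s | f a = b}.Countable := by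
  by_contra! h
  refine hs ((Set.countable_iUnion h).mono fun a ha => ?_)
  exact Set.mem_iUnion.2 ⟨f a, ha, rfl⟩

theorem Set.exists_maximal_pairwise_subset {α : Type*} (s : Set α) (r : α → α → Prop) :
    ∃ m, Maximal (fun m => m ⊆ s ∧ m.Pairwise r) m :=
  zorn_subset {m | m ⊆ s ∧ m.Pairwise r} fun c hcs hc =>
    ⟨⋃₀ c, ⟨Set.sUnion_subset fun _ ht => (hcs ht).1,
      hc.pairwise_sUnion.2 fun _ ht => (hcs ht).2⟩, fun _ => Set.subset_sUnion_of_mem⟩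

section DeltaSystem

variable {α : Type*}

/-- A maximal pairwise disjoint subfamily `M` meets every member of `D`, so `D` is covered by
`M` and the countably many families `{A ∈ D | x ∈ A}` with `x ∈ ⋃ M`. -/
theorem Finset.exists_pairwise_disjoint_not_countable {D : Set (Finset α)} (hD : ¬ D.Countable)
    (hmem : ∀ x, {A ∈ D | x ∈ A}.Countable) :
    ∃ M ⊆ D, ¬ M.Countable ∧ M.Pairwise Disjoint := by
  obtain ⟨M, ⟨hMD, hM⟩, hmax⟩ := D.exists_maximal_pairwise_subset Disjoint
  refine ⟨M, hMD, fun hMc => hD ?_, hM⟩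
  have hmeets : ∀ A ∈ D, A ∉ M → ∃ B ∈ M, ∃ x ∈ A, x ∈ B := by
    intro A hA hAM
    by_contra! h
    have hins : insert A M ⊆ D ∧ (insert A M).Pairwise Disjoint :=
      ⟨Set.insert_subset hA hMD, hM.insert fun B hB _ =>
        ⟨Finset.disjoint_left.2 (h B hB), Finset.disjoint_right.2 (h B hB)⟩⟩
    exact hAM (hmax hins (Set.subset_insert A M) (Set.mem_insert A M))
  have hcover : D ⊆ M ∪ ⋃ x ∈ ⋃ B ∈ M, (B : Set α), {A ∈ D | x ∈ A} := by
    intro A hA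
    by_cases hAM : A ∈ M
    · exact Or.inl hAM
    · obtain ⟨B, hB, x, hxA, hxB⟩ := hmeets A hA hAM
      exact Or.inr (Set.mem_biUnion (Set.mem_biUnion hB hxB) ⟨hA, hxA⟩)
  exact (hMc.union ((hMc.biUnion fun B _ => B.countable_toSet).biUnion fun x _ => hmem x)).mono
    hcover

variable [DecidableEq α]

theorem Finset.exists_delta_system_of_card_le (n : ℕ) {D : Set (Finset α)} (hD : ¬ D.Countable)
    (hcard : ∀ A ∈ D, A.card ≤ n) :
    ∃ r, ∃ D' ⊆ D, ¬ D'.Countable ∧ D'.Pairwise fun A B => A ∩ B = r := by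
  induction n generalizing D with
  | zero =>
    refine absurd ((Set.countable_singleton ∅).mono fun A hA => ?_) hD
    exact Finset.card_eq_zero.1 (Nat.le_zero.1 (hcard A hA))
  | succ n ih =>
    by_cases hmem : ∀ x, {A ∈ D | x ∈ A}.Countable
    · obtain ⟨M, hMD, hM, hMdisj⟩ := Finset.exists_pairwise_disjoint_not_countable hD hmem
      exact ⟨∅, M, hMD, hM, hMdisj.mono' fun A B => Finset.disjoint_iff_inter_eq_empty.1⟩
    -- An element `x` common to uncountably many members: remove it, recurse, and put it back.
    obtain ⟨x, hx⟩ := not_forall.1 hmem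
    have hinj : Set.InjOn (·.erase x) {A ∈ D | x ∈ A} :=
      (Finset.erase_injOn' x).mono fun _ hA => hA.2
    have hE : ¬ ((·.erase x) '' {A ∈ D | x ∈ A}).Countable :=
      fun h => hx (Set.countable_of_injective_of_countable_image hinj h)
    have hEcard : ∀ A ∈ (·.erase x) '' {A ∈ D | x ∈ A}, A.card ≤ n := by
      rintro _ ⟨A, hA, rfl⟩
      have := hcard A hA.1
      rw [Finset.card_erase_of_mem hA.2]
      omega
    obtain ⟨r, E', hE'E, hE', hE'r⟩ := ih hE hEcard
    refine ⟨insert x r, {A ∈ D | x ∈ A ∧ A.erase x ∈ E'}, fun A hA => hA.1,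
      fun h => hE' ?_, ?_⟩
    · refine (h.image (·.erase x)).mono fun B hB => ?_
      obtain ⟨A, hA, rfl⟩ := hE'E hB
      exact ⟨A, ⟨hA.1, hA.2, hB⟩, rfl⟩
    · intro A hA B hB hAB
      have hne : A.erase x ≠ B.erase x :=
        fun h => hAB (hinj ⟨hA.1, hA.2.1⟩ ⟨hB.1, hB.2.1⟩ h)
      rw [← Finset.insert_erase (Finset.mem_inter.2 ⟨hA.2.1, hB.2.1⟩),
        ← hE'r hA.2.2 hB.2.2 hne, Finset.erase_inter, Finset.inter_erase, Finset.erase_idem]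

theorem Finset.exists_delta_system {D : Set (Finset α)} (hD : ¬ D.Countable) :
    ∃ r, ∃ D' ⊆ D, ¬ D'.Countable ∧ D'.Pairwise fun A B => A ∩ B = r := by
  obtain ⟨n, hn⟩ := Set.exists_not_countable_fiber hD Finset.card
  obtain ⟨r, D', hD'n, hD', hr⟩ :=
    Finset.exists_delta_system_of_card_le n hn fun A hA => hA.2.le
  exact ⟨r, D', fun A hA => (hD'n hA).1, hD', hr⟩

theorem Finset.exists_delta_system_image {ι : Type*} {s : Set ι} (f : ι → Finset α)
    (hs : ¬ (f '' s).Countable) :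
    ∃ r, ∃ t ⊆ s, ¬ t.Countable ∧ t.Pairwise fun i j => f i ∩ f j = r := by
  obtain ⟨u, hus, hu⟩ := Set.exists_subset_bijOn s f
  obtain ⟨r, D, hDu, hD, hr⟩ := Finset.exists_delta_system (hu.image_eq ▸ hs)
  have himage : D ⊆ f '' {i ∈ u | f i ∈ D} := by
    intro A hA
    obtain ⟨i, hi, rfl⟩ := hDu hA
    exact ⟨i, ⟨hi, hA⟩, rfl⟩
  refine ⟨r, {i ∈ u | f i ∈ D}, fun i hi => hus hi.1, fun h => hD ((h.image f).mono himage),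
    fun i hi j hj hij => hr hi.2 hj.2 fun h => hij (hu.injOn hi.1 hj.1 h)⟩

end DeltaSystem

namespace FinStruct

variable {L : Type*} {ar : L → ℕ} {κ : Type*}

/-- Unlike `p.restrict B`, this lives in a type that is finite when `L` is, so it can be
pigeonholed. -/
def trace (p : FinStruct L ar κ) (B : Finset κ) : ∀ R : L, (Fin (ar R) → B) → Prop :=
  fun R t => p.rel R fun i => t i

theorem rel_iff_of_trace_eq {p q : FinStruct L ar κ} {B : Finset κ} (h : p.trace B = q.trace B)
    {R : L} {t : Fin (ar R) → κ} (ht : ∀ i, t i ∈ B) : p.rel R t ↔ q.rel R t :=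
  iff_of_eq (congrFun (congrFun h R) fun i => ⟨t i, ht i⟩)

theorem ext_of_rel_iff {p q : FinStruct L ar κ} (hA : p.A = q.A)
    (h : ∀ R t, p.rel R t ↔ q.rel R t) : p = q := by
  obtain ⟨A, rel, _⟩ := p
  obtain ⟨A', rel', _⟩ := q
  obtain rfl : A = A' := hA
  obtain rfl : rel = rel' := funext fun R => funext fun t => propext (h R t)
  rfl

theorem eq_of_trace_eq {p q : FinStruct L ar κ} (hA : p.A = q.A) (h : p.trace p.A = q.trace p.A) :
    p = q :=
  ext_of_rel_iff hA fun R t =>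
    ⟨fun hr => (rel_iff_of_trace_eq h (p.supp R t hr)).1 hr,
      fun hr => (rel_iff_of_trace_eq h (hA ▸ q.supp R t hr)).2 hr⟩

theorem finite_setOf_A_eq [Finite L] (B : Finset κ) : {p : FinStruct L ar κ | p.A = B}.Finite :=
  Set.Finite.of_finite_image (f := (·.trace B)) (Set.toFinite _) fun _ hp _ hq h =>
    eq_of_trace_eq (hp.trans hq.symm) (hp ▸ h)

theorem countable_of_countable_image_A [Finite L] {S : Set (FinStruct L ar κ)}
    (h : (FinStruct.A '' S).Countable) : S.Countable :=
  (h.biUnion fun B _ => (finite_setOf_A_eq B).countable).mono fun p hp =>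
    Set.mem_biUnion (Set.mem_image_of_mem FinStruct.A hp) (show p.A = p.A from rfl)

theorem restrict_eq_restrict_of_rel_iff [DecidableEq κ] {p q : FinStruct L ar κ}
    (h : ∀ R t, (∀ i, t i ∈ p.A ∩ q.A) → (p.rel R t ↔ q.rel R t)) :
    p.restrict q.A = q.restrict p.A := by
  refine ext_of_rel_iff (Finset.inter_comm _ _) fun R t => ?_
  show (p.rel R t ∧ ∀ i, t i ∈ q.A) ↔ (q.rel R t ∧ ∀ i, t i ∈ p.A)
  constructor
  · rintro ⟨hpt, hqA⟩
    exact ⟨(h R t fun i => Finset.mem_inter.2 ⟨p.supp R t hpt i, hqA i⟩).1 hpt,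
      p.supp R t hpt⟩
  · rintro ⟨hqt, hpA⟩
    exact ⟨(h R t fun i => Finset.mem_inter.2 ⟨hpA i, q.supp R t hqt i⟩).2 hqt,
      q.supp R t hqt⟩

end FinStruct

theorem knaster_finStruct_general {L : Type*} [Finite L] (ar : L → ℕ)
    {κ : Type*} [DecidableEq κ]
    (K : Set (FinStruct L ar κ))
    (hAP : ∀ p ∈ K, ∀ q ∈ K, p.restrict q.A = q.restrict p.A →
      ∃ s ∈ K, s.Ext p ∧ s.Ext q)
    (S : Set (FinStruct L ar κ)) (hSK : S ⊆ K) (hS : ¬ S.Countable) :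
    ∃ T ⊆ S, ¬ T.Countable ∧
      ∀ p ∈ T, ∀ q ∈ T, ∃ s ∈ K, s.Ext p ∧ s.Ext q := by
  obtain ⟨r, T₀, hT₀S, hT₀, hr⟩ :=
    Finset.exists_delta_system_image FinStruct.A fun h => hS (countable_of_countable_image_A h)
  obtain ⟨c, hc⟩ := Set.exists_not_countable_fiber hT₀ (·.trace r)
  refine ⟨{p ∈ T₀ | p.trace r = c}, fun p hp => hT₀S hp.1, hc, fun p hp q hq => ?_⟩
  refine hAP p (hSK (hT₀S hp.1)) q (hSK (hT₀S hq.1)) (restrict_eq_restrict_of_rel_iff ?_)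
  rcases eq_or_ne p q with rfl | hpq
  · exact fun _ _ _ => Iff.rfl
  · rw [hr hp.1 hq.1 hpq]
    exact fun R t ht => rel_iff_of_trace_eq (hp.2.trans hq.2.symm) ht

/-- Let `L` be a finite relational language, `κ ≥ ℵ₁`, and `K` a Fraïssé class of
finite `L`-structures with universes finite subsets of `κ` (closed under isomorphism
and substructure, with JEP and the amalgamation property -- in the strong form over
intersections arising from the Δ-system argument). Then the poset `P_{κ,K}` is
Knaster: every uncountable set of conditions has an uncountable pairwise compatible
subset. -/
theorem knaster_finStruct {L : Type*} [Finite L] (ar : L → ℕ)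
    {κ : Type*} [DecidableEq κ] [Uncountable κ]
    (K : Set (FinStruct L ar κ))
    (hIso : ∀ p ∈ K, ∀ q : FinStruct L ar κ, Iso p q → q ∈ K)
    (hSub : ∀ p ∈ K, ∀ B : Finset κ, p.restrict B ∈ K)
    (hJEP : ∀ p ∈ K, ∀ q ∈ K, ∃ s ∈ K, Emb p s ∧ Emb q s)
    (hAP : ∀ p ∈ K, ∀ q ∈ K, p.restrict q.A = q.restrict p.A →
      ∃ s ∈ K, s.Ext p ∧ s.Ext q)
    (S : Set (FinStruct L ar κ)) (hSK : S ⊆ K) (hS : ¬ S.Countable) :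
    ∃ T ⊆ S, ¬ T.Countable ∧
      ∀ p ∈ T, ∀ q ∈ T, ∃ s ∈ K, s.Ext p ∧ s.Ext q :=
  knaster_finStruct_general ar K hAP S hSK hS
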